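/- arXiv:1804.03002 — 2 statements merged into one kernel-verified Lean document; each statement's English description precedes it below -/
import Mathlib

section
/- For the fractional kernel K(t) = (1/Γ(H+1/2)) [t^{H-1/2} - a ∫_0^t (t-s)^{H-1/2} e^{-as} ds] with Hurst parameter H ∈ (0, 1/2) and a > 0, the kernel K is integrable on (0, ∞), i.e., ∫_0^∞ |K(t)| dt < ∞. -/
/-!
Write `p = H - 1/2 ∈ (-1, 0)`, so that `Γ(H + 1/2) K(t) = t^p - a ∫₀ᵗ (t - s)^p e^{-as} ds`.
Near `0` both terms are `O(t^p)`, which is integrable. For large `t`, since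
`a ∫₀ᵗ e^{-as} ds = 1 - e^{-at}`, the kernel equals
`t^p e^{-at} - a ∫₀ᵗ ((t - s)^p - t^p) e^{-as} ds`. For `s ≤ t/2` the mean value theorem bounds
the difference by `|p| (t/2)^{p-1} s`, and for `s > t/2` the weight `e^{-as} ≤ e^{-at/2}` makes
that part exponentially small, so `K(t) = O(t^{p-1})` with `p - 1 < -1`.
-/

open MeasureTheory Set Real

lemma integrableOn_rpow_mul_exp_neg_mul {s b : ℝ} (hs : -1 < s) (hb : 0 < b) :
    IntegrableOn (fun x : ℝ => x ^ s * exp (-b * x)) (Ioi 0) := by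
  simpa only [rpow_one] using integrableOn_rpow_mul_exp_neg_mul_rpow hs one_pos hb

lemma abs_rpow_sub_rpow_le {p b x y : ℝ} (hp : p ≤ 1) (hb : 0 < b) (hx : b ≤ x) (hy : b ≤ y) :
    |x ^ p - y ^ p| ≤ |p| * b ^ (p - 1) * |x - y| := by
  have hderiv : ∀ z ∈ Ici b, HasDerivWithinAt (fun z : ℝ => z ^ p) (p * z ^ (p - 1)) (Ici b) z :=
    fun z hz => (hasDerivAt_rpow_const (Or.inl (hb.trans_le hz).ne')).hasDerivWithinAt
  have hbound : ∀ z ∈ Ici b, ‖p * z ^ (p - 1)‖ ≤ |p| * b ^ (p - 1) := fun z hz => by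
    rw [norm_mul, norm_eq_abs, norm_of_nonneg (rpow_nonneg (hb.le.trans hz) _)]
    exact mul_le_mul_of_nonneg_left (rpow_le_rpow_of_nonpos hb hz (by linarith)) (abs_nonneg p)
  exact (convex_Ici b).norm_image_sub_le_of_norm_hasDerivWithin_le hderiv hbound hy hx

lemma stronglyMeasurable_setIntegral_Ioc {E : Type*} [NormedAddCommGroup E] [NormedSpace ℝ E]
    {f : ℝ → ℝ → E} (hf : StronglyMeasurable (Function.uncurry f)) (c : ℝ) :
    StronglyMeasurable fun t => ∫ s in Ioc c t, f t s := by
  have hS : MeasurableSet {q : ℝ × ℝ | q.2 ∈ Ioc c q.1} :=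
    (measurableSet_lt measurable_const measurable_snd).inter
      (measurableSet_le measurable_snd measurable_fst)
  have hind : (fun t => ∫ s in Ioc c t, f t s)
      = fun t => ∫ s, {q : ℝ × ℝ | q.2 ∈ Ioc c q.1}.indicator (Function.uncurry f) (t, s) := by
    funext t
    rw [← integral_indicator measurableSet_Ioc]
    rfl
  rw [hind]
  exact (hf.indicator hS).integral_prod_right'

lemma integrableOn_sub_rpow_Ioc {p t : ℝ} (hp : -1 < p) (ht : 0 ≤ t) :
    IntegrableOn (fun s : ℝ => (t - s) ^ p) (Ioc 0 t) := by
  rw [← intervalIntegrable_iff_integrableOn_Ioc_of_le ht]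
  simpa using
    (intervalIntegral.intervalIntegrable_rpow' (a := t - 0) (b := t - t) hp).comp_sub_left t

lemma integral_sub_rpow_Ioc {p t : ℝ} (hp : -1 < p) (ht : 0 ≤ t) :
    ∫ s in Ioc 0 t, (t - s) ^ p = t ^ (p + 1) / (p + 1) := by
  rw [← intervalIntegral.integral_of_le ht,
    intervalIntegral.integral_comp_sub_left (fun x => x ^ p) t, sub_self, sub_zero,
    integral_rpow (Or.inl hp), zero_rpow (by linarith), sub_zero]

lemma integral_exp_neg_mul_Ioc {a t : ℝ} (ha : a ≠ 0) (ht : 0 ≤ t) :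
    ∫ s in Ioc 0 t, exp (-a * s) = (1 - exp (-a * t)) / a := by
  rw [← intervalIntegral.integral_of_le ht,
    intervalIntegral.integral_comp_mul_left exp (neg_ne_zero.mpr ha), integral_exp, mul_zero,
    exp_zero, smul_eq_mul]
  field_simp
  ring

noncomputable def powExpConv (p a t : ℝ) : ℝ := ∫ s in Ioc 0 t, (t - s) ^ p * exp (-a * s)

namespace powExpConv

variable {p a t : ℝ}

lemma stronglyMeasurable (p a : ℝ) : StronglyMeasurable (powExpConv p a) :=
  stronglyMeasurable_setIntegral_Ioc (f := fun t s => (t - s) ^ p * exp (-a * s))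
    (by fun_prop) 0

lemma integrableOn_integrand (hp : -1 < p) (ht : 0 ≤ t) :
    IntegrableOn (fun s : ℝ => (t - s) ^ p * exp (-a * s)) (Ioc 0 t) :=
  (integrableOn_sub_rpow_Ioc hp ht).mul_continuousOn_of_subset (by fun_prop) measurableSet_Ioc
    isCompact_Icc Ioc_subset_Icc_self

lemma abs_le (hp : -1 < p) (ha : 0 ≤ a) (ht : 0 ≤ t) :
    |powExpConv p a t| ≤ t ^ (p + 1) / (p + 1) := by
  rw [← integral_sub_rpow_Ioc hp ht]
  refine abs_integral_le_integral_abs.trans <|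
    setIntegral_mono_on (integrableOn_integrand hp ht).abs (integrableOn_sub_rpow_Ioc hp ht)
      measurableSet_Ioc fun s hs => ?_
  have hexp : exp (-a * s) ≤ 1 := exp_le_one_iff.mpr (by nlinarith [hs.1])
  rw [abs_mul, abs_of_nonneg (rpow_nonneg (sub_nonneg.mpr hs.2) p), abs_exp]
  exact mul_le_of_le_one_right (rpow_nonneg (sub_nonneg.mpr hs.2) p) hexp

lemma rpow_sub_mul_eq (hp : -1 < p) (ha : a ≠ 0) (ht : 0 ≤ t) :
    t ^ p - a * powExpConv p a t =
      t ^ p * exp (-a * t) - a * ∫ s in Ioc 0 t, ((t - s) ^ p - t ^ p) * exp (-a * s) := by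
  have hsplit : ∫ s in Ioc 0 t, ((t - s) ^ p - t ^ p) * exp (-a * s)
      = powExpConv p a t - t ^ p * ∫ s in Ioc 0 t, exp (-a * s) := by
    simp_rw [sub_mul]
    rw [integral_sub (integrableOn_integrand hp ht)
      ((by fun_prop : Continuous fun s => exp (-a * s)).integrableOn_Ioc.const_mul _),
      integral_const_mul]
    rfl
  rw [hsplit, integral_exp_neg_mul_Ioc ha ht]
  field_simp
  ring

lemma abs_rpow_sub_mul_le_small (hp : -1 < p) (ha : 0 ≤ a) (ht : 0 ≤ t) :
    |t ^ p - a * powExpConv p a t| ≤ t ^ p + a / (p + 1) * t ^ (p + 1) := by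
  calc |t ^ p - a * powExpConv p a t| ≤ |t ^ p| + a * |powExpConv p a t| :=
        (abs_sub _ _).trans_eq (by rw [abs_mul, abs_of_nonneg ha])
    _ ≤ t ^ p + a * (t ^ (p + 1) / (p + 1)) := by
        rw [abs_of_nonneg (rpow_nonneg ht p)]; gcongr; exact abs_le hp ha ht
    _ = t ^ p + a / (p + 1) * t ^ (p + 1) := by ring

lemma abs_sub_rpow_mul_exp_le {s : ℝ} (hp : p ≤ 0) (ha : 0 ≤ a) (hs : s ∈ Ioo 0 t) :
    |(t - s) ^ p - t ^ p| * exp (-a * s) ≤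
      |p| * (t / 2) ^ (p - 1) * (s * exp (-a * s)) + exp (-a * (t / 2)) * (t - s) ^ p := by
  obtain ⟨hs0, hst⟩ := hs
  have ht2 : 0 < t / 2 := by linarith
  have hnear : 0 ≤ |p| * (t / 2) ^ (p - 1) * (s * exp (-a * s)) := by
    have := rpow_nonneg ht2.le (p - 1); positivity
  have hfar : 0 ≤ exp (-a * (t / 2)) * (t - s) ^ p := by
    have := rpow_nonneg (sub_nonneg.mpr hst.le) p; positivity
  rcases le_or_gt s (t / 2) with hs2 | hs2
  · have hmvt := abs_rpow_sub_rpow_le (hp.trans zero_le_one) ht2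
      (by linarith : t / 2 ≤ t - s) (by linarith : t / 2 ≤ t)
    rw [sub_sub_cancel_left, abs_neg, abs_of_pos hs0] at hmvt
    calc |(t - s) ^ p - t ^ p| * exp (-a * s)
        ≤ |p| * (t / 2) ^ (p - 1) * s * exp (-a * s) := by gcongr
      _ ≤ _ := by rw [mul_assoc (|p| * _)]; linarith
  · have hmono : t ^ p ≤ (t - s) ^ p := rpow_le_rpow_of_nonpos (by linarith) (by linarith) hp
    calc |(t - s) ^ p - t ^ p| * exp (-a * s)
        ≤ (t - s) ^ p * exp (-a * (t / 2)) := by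
          rw [abs_of_nonneg (sub_nonneg.mpr hmono)]
          exact mul_le_mul (by linarith [rpow_nonneg (by linarith : (0 : ℝ) ≤ t) p])
            (exp_le_exp.mpr (by nlinarith)) (exp_pos _).le (rpow_nonneg (by linarith) p)
      _ ≤ _ := by linarith

lemma abs_rpow_sub_mul_le_large (hp : -1 < p) (hp0 : p ≤ 0) (ha : 0 < a) (ht : 0 < t) :
    |t ^ p - a * powExpConv p a t| ≤ t ^ p * exp (-a * t) +
      a * |p| * (∫ s in Ioi 0, s * exp (-a * s)) / 2 ^ (p - 1) * t ^ (p - 1) +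
      a / (p + 1) * (t ^ (p + 1) * exp (-(a / 2) * t)) := by
  set M := ∫ s in Ioi 0, s * exp (-a * s)
  have hMint : IntegrableOn (fun s : ℝ => s * exp (-a * s)) (Ioi 0) := by
    simpa only [rpow_one] using integrableOn_rpow_mul_exp_neg_mul (s := 1) (by norm_num) ha
  have hM : ∫ s in Ioo 0 t, s * exp (-a * s) ≤ M :=
    setIntegral_mono_set hMint
      (ae_restrict_of_forall_mem measurableSet_Ioi fun s (hs : 0 < s) => by positivity)
      Ioo_subset_Ioi_self.eventuallyLE
  have hbound : IntegrableOn (fun s => |p| * (t / 2) ^ (p - 1) * (s * exp (-a * s)) +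
      exp (-a * (t / 2)) * (t - s) ^ p) (Ioo 0 t) :=
    ((hMint.mono_set Ioo_subset_Ioi_self).const_mul _).add
      (((integrableOn_sub_rpow_Ioc hp ht.le).mono_set Ioo_subset_Ioc_self).const_mul _)
  have herr : |∫ s in Ioc 0 t, ((t - s) ^ p - t ^ p) * exp (-a * s)| ≤
      |p| * (t / 2) ^ (p - 1) * M + exp (-a * (t / 2)) * (t ^ (p + 1) / (p + 1)) := by
    rw [integral_Ioc_eq_integral_Ioo, ← integral_sub_rpow_Ioc hp ht.le,
      integral_Ioc_eq_integral_Ioo]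
    have hpoint : ∀ s ∈ Ioo 0 t, ‖((t - s) ^ p - t ^ p) * exp (-a * s)‖ ≤
        |p| * (t / 2) ^ (p - 1) * (s * exp (-a * s)) + exp (-a * (t / 2)) * (t - s) ^ p :=
      fun s hs => by
        rw [norm_mul, norm_eq_abs, norm_of_nonneg (exp_pos _).le]
        exact abs_sub_rpow_mul_exp_le hp0 ha.le hs
    calc |∫ s in Ioo 0 t, ((t - s) ^ p - t ^ p) * exp (-a * s)|
      _ ≤ ∫ s in Ioo 0 t, (|p| * (t / 2) ^ (p - 1) * (s * exp (-a * s)) +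
            exp (-a * (t / 2)) * (t - s) ^ p) :=
          norm_integral_le_of_norm_le hbound (ae_restrict_of_forall_mem measurableSet_Ioo hpoint)
      _ = |p| * (t / 2) ^ (p - 1) * (∫ s in Ioo 0 t, s * exp (-a * s)) +
            exp (-a * (t / 2)) * ∫ s in Ioo 0 t, (t - s) ^ p := by
          rw [integral_add ((hMint.mono_set Ioo_subset_Ioi_self).const_mul _)
              (((integrableOn_sub_rpow_Ioc hp ht.le).mono_set Ioo_subset_Ioc_self).const_mul _),
            integral_const_mul, integral_const_mul]
      _ ≤ _ := by
          have := rpow_nonneg (half_pos ht).le (p - 1)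
          gcongr
  rw [rpow_sub_mul_eq hp ha.ne' ht.le]
  calc _ ≤ t ^ p * exp (-a * t) + a * |∫ s in Ioc 0 t, ((t - s) ^ p - t ^ p) * exp (-a * s)| :=
        (abs_sub _ _).trans_eq <| by
          rw [abs_of_nonneg (by have := rpow_nonneg ht.le p; positivity), abs_mul, abs_of_pos ha]
    _ ≤ t ^ p * exp (-a * t) +
          a * (|p| * (t / 2) ^ (p - 1) * M + exp (-a * (t / 2)) * (t ^ (p + 1) / (p + 1))) := by
        gcongr
    _ = _ := by
        rw [div_rpow ht.le zero_le_two, show -a * (t / 2) = -(a / 2) * t by ring]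
        ring

theorem integrableOn_rpow_sub_mul (hp : -1 < p) (hp0 : p < 0) (ha : 0 < a) :
    IntegrableOn (fun t => t ^ p - a * powExpConv p a t) (Ioi 0) := by
  have hmeas : StronglyMeasurable fun t => t ^ p - a * powExpConv p a t :=
    (measurable_id.pow_const p).stronglyMeasurable.sub
      (stronglyMeasurable_const.mul (stronglyMeasurable p a))
  rw [← Ioc_union_Ioi_eq_Ioi zero_le_one]
  refine IntegrableOn.union ?_ ?_
  · have hdom : IntegrableOn (fun t : ℝ => t ^ p + a / (p + 1) * t ^ (p + 1)) (Ioc 0 1) := by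
      rw [← intervalIntegrable_iff_integrableOn_Ioc_of_le zero_le_one]
      exact (intervalIntegral.intervalIntegrable_rpow' hp).add
        ((intervalIntegral.intervalIntegrable_rpow' (by linarith)).const_mul _)
    exact hdom.mono' hmeas.aestronglyMeasurable <| ae_restrict_of_forall_mem measurableSet_Ioc
      fun t ht => abs_rpow_sub_mul_le_small hp ha.le ht.1.le
  · have hIoi : Ioi (1 : ℝ) ⊆ Ioi 0 := Ioi_subset_Ioi zero_le_one
    have hdom : IntegrableOn (fun t : ℝ => t ^ p * exp (-a * t) +
        a * |p| * (∫ s in Ioi 0, s * exp (-a * s)) / 2 ^ (p - 1) * t ^ (p - 1) +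
        a / (p + 1) * (t ^ (p + 1) * exp (-(a / 2) * t))) (Ioi 1) :=
      (((integrableOn_rpow_mul_exp_neg_mul hp ha).mono_set hIoi).add
        ((integrableOn_Ioi_rpow_of_lt (by linarith) one_pos).const_mul _)).add
        (((integrableOn_rpow_mul_exp_neg_mul (by linarith) (half_pos ha)).mono_set
          hIoi).const_mul _)
    exact hdom.mono' hmeas.aestronglyMeasurable <| ae_restrict_of_forall_mem measurableSet_Ioi
      fun t ht => abs_rpow_sub_mul_le_large hp hp0.le ha (zero_lt_one.trans ht)

end powExpConv

/-- The fractional kernel `K(t) = (1/Γ(H+1/2)) [t^{H-1/2} - a ∫_0^t (t-s)^{H-1/2} e^{-as} ds]`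
with `H ∈ (0, 1/2)` and `a > 0` is integrable on `(0, ∞)`. -/
theorem kernel_integrable (H a : ℝ) (hH : H ∈ Set.Ioo (0 : ℝ) (1/2)) (ha : 0 < a)
    (K : ℝ → ℝ)
    (hK : ∀ t : ℝ, 0 < t → K t = (1 / Real.Gamma (H + 1/2)) *
      (t ^ (H - 1/2) - a * ∫ s in Set.Ioc (0:ℝ) t, (t - s) ^ (H - 1/2) * Real.exp (-a * s))) :
    MeasureTheory.IntegrableOn K (Set.Ioi (0 : ℝ)) := by
  obtain ⟨hH0, hH1⟩ := hH
  have hp : -1 < H - 1 / 2 := by linarith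
  have hp0 : H - 1 / 2 < 0 := by linarith
  refine IntegrableOn.congr_fun ?_ (fun t ht => (hK t ht).symm) measurableSet_Ioi
  exact (powExpConv.integrableOn_rpow_sub_mul hp hp0 ha).const_mul _
end

section
/- For the fractional kernel K(t) = (1/Γ(H+1/2)) [t^{H-1/2} - a ∫_0^t (t-s)^{H-1/2} e^{-as} ds] with H ∈ (0,1), the kernel K is square integrable on (0, ∞): ∫_0^∞ K(t)² dt < ∞. -/
open MeasureTheory Set Real

/-!
Write `α = H - 1/2 ∈ (-1/2, 1/2)` and `F(t) = rpowConvExp α a t = ∫₀ᵗ (t - s)^α e^{-as} ds`,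
so that `0 ≤ F(t) ≤ t^{α+1}/(α+1)`.
Near `0` the bracket `t^α - a F(t)` is bounded by `t^α` plus a constant, which is square
integrable because `2α > -1`. For large `t`, split `F` at `u = t/2` and use
`a ∫₀ᵘ e^{-as} ds = 1 - e^{-au}`:
`t^α - a F(t) = t^α e^{-au} + a ∫₀ᵘ (t^α - (t-s)^α) e^{-as} ds - a ∫ᵤᵗ (t-s)^α e^{-as} ds`.
By the mean value theorem the middle term is `O(t^{α-1})`, square integrable at infinity because
`α < 1/2`, and the other two are `O(t^{α+1} e^{-at/2})`.
-/

namespace FractionalKernel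

variable {α a t u : ℝ}

noncomputable def rpowConvExp (α a t : ℝ) : ℝ :=
  ∫ s in Ioc 0 t, (t - s) ^ α * exp (-a * s)

lemma integrableOn_sub_rpow_Ioc (hα : -1 < α) (hut : u ≤ t) :
    IntegrableOn (fun s => (t - s) ^ α) (Ioc u t) := by
  have h := (intervalIntegral.intervalIntegrable_rpow' (a := 0) (b := t - u) hα).comp_sub_left t
  simp only [sub_zero, sub_sub_cancel] at h
  exact (intervalIntegrable_iff_integrableOn_Ioc_of_le hut).mp h.symm

lemma integral_sub_rpow_Ioc (hα : -1 < α) (hut : u ≤ t) :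
    ∫ s in Ioc u t, (t - s) ^ α = (t - u) ^ (α + 1) / (α + 1) := by
  rw [← intervalIntegral.integral_of_le hut, intervalIntegral.integral_comp_sub_left
    (fun x => x ^ α), sub_self, integral_rpow (Or.inl hα), zero_rpow (by linarith)]
  ring

lemma integrableOn_sub_rpow_mul_exp_Ioc (hα : -1 < α) (a : ℝ) (hut : u ≤ t) :
    IntegrableOn (fun s => (t - s) ^ α * exp (-a * s)) (Ioc u t) := by
  refine (IntegrableOn.mul_continuousOn ?_ (by fun_prop) isCompact_Icc).mono_set
    Ioc_subset_Icc_self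
  exact (integrableOn_Icc_iff_integrableOn_Ioc (by finiteness)).mpr
    (integrableOn_sub_rpow_Ioc hα hut)

lemma integral_exp_neg_mul_Ioc (ha : a ≠ 0) (hu : 0 ≤ u) :
    ∫ s in Ioc 0 u, exp (-a * s) = (1 - exp (-a * u)) / a := by
  rw [← intervalIntegral.integral_of_le hu,
    intervalIntegral.integral_comp_mul_left exp (neg_ne_zero.mpr ha), integral_exp]
  simp only [mul_zero, exp_zero, smul_eq_mul]
  field_simp
  ring

lemma integral_mul_exp_neg_mul_Ioi (ha : 0 < a) :
    ∫ s in Ioi 0, s * exp (-a * s) = 1 / a ^ 2 := by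
  have h := integral_rpow_mul_exp_neg_mul_Ioi two_pos ha
  norm_num at h
  simpa only [neg_mul, one_div] using h

lemma integrableOn_mul_exp_neg_mul_Ioi (ha : 0 < a) :
    IntegrableOn (fun s => s * exp (-a * s)) (Ioi 0) := by
  have h := integrableOn_rpow_mul_exp_neg_mul_rpow (s := 1) (p := 1) (by norm_num) one_pos ha
  simpa only [rpow_one] using h

lemma measurable_rpowConvExp (α a : ℝ) : Measurable (rpowConvExp α a) := by
  have hprod : Measurable fun p : ℝ × ℝ =>
      (Ioc 0 p.1).indicator (fun s => (p.1 - s) ^ α * exp (-a * s)) p.2 := by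
    simp only [indicator_apply, mem_Ioc]
    refine Measurable.ite ?_ (by fun_prop) measurable_const
    exact (measurableSet_lt measurable_const measurable_snd).inter
      (measurableSet_le measurable_snd measurable_fst)
  have h : rpowConvExp α a = fun t =>
      ∫ s, (Ioc 0 t).indicator (fun s => (t - s) ^ α * exp (-a * s)) s :=
    funext fun t => (integral_indicator measurableSet_Ioc).symm
  rw [h]
  exact hprod.stronglyMeasurable.integral_prod_right'.measurable

lemma setIntegral_sub_rpow_mul_exp_nonneg (α a : ℝ) :
    0 ≤ ∫ s in Ioc u t, (t - s) ^ α * exp (-a * s) :=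
  setIntegral_nonneg measurableSet_Ioc fun _ hs =>
    mul_nonneg (rpow_nonneg (sub_nonneg.mpr hs.2) α) (exp_nonneg _)

lemma setIntegral_sub_rpow_mul_exp_le (hα : -1 < α) (ha : 0 ≤ a) (hut : u ≤ t) :
    ∫ s in Ioc u t, (t - s) ^ α * exp (-a * s) ≤ exp (-a * u) * ((t - u) ^ (α + 1) / (α + 1)) := by
  rw [← integral_sub_rpow_Ioc hα hut, ← integral_const_mul]
  refine setIntegral_mono_on (integrableOn_sub_rpow_mul_exp_Ioc hα a hut)
    ((integrableOn_sub_rpow_Ioc hα hut).const_mul _) measurableSet_Ioc fun s hs => ?_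
  rw [mul_comm]
  exact mul_le_mul_of_nonneg_right (exp_le_exp.mpr (by nlinarith [hs.1]))
    (rpow_nonneg (sub_nonneg.mpr hs.2) α)

lemma abs_rpow_sub_rpow_le (hα : α ≤ 1) {c x y : ℝ} (hc : 0 < c) (hcx : c ≤ x) (hxy : x ≤ y) :
    |y ^ α - x ^ α| ≤ |α| * c ^ (α - 1) * (y - x) := by
  refine norm_image_sub_le_of_norm_deriv_le_segment' (f' := fun z => α * z ^ (α - 1))
    (fun z hz => (hasDerivAt_rpow_const
      (Or.inl (hc.trans_le (hcx.trans hz.1)).ne')).hasDerivWithinAt)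
    (fun z hz => ?_) y ⟨hxy, le_rfl⟩
  have hcz : c ≤ z := hcx.trans hz.1
  rw [norm_mul, Real.norm_eq_abs, Real.norm_of_nonneg (rpow_nonneg (hc.le.trans hcz) _)]
  exact mul_le_mul_of_nonneg_left (rpow_le_rpow_of_nonpos hc hcz (by linarith)) (abs_nonneg α)

lemma abs_setIntegral_rpow_sub_rpow_mul_exp_le (hα : α ≤ 1) (ha : 0 < a) (hut : u < t) :
    |∫ s in Ioc 0 u, (t ^ α - (t - s) ^ α) * exp (-a * s)| ≤ |α| * (t - u) ^ (α - 1) / a ^ 2 := by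
  have hs_exp := integrableOn_mul_exp_neg_mul_Ioi ha
  calc |∫ s in Ioc 0 u, (t ^ α - (t - s) ^ α) * exp (-a * s)|
      ≤ ∫ s in Ioc 0 u, |α| * (t - u) ^ (α - 1) * (s * exp (-a * s)) := by
        rw [← Real.norm_eq_abs]
        refine norm_integral_le_of_norm_le ((hs_exp.mono_set Ioc_subset_Ioi_self).const_mul _)
          ((ae_restrict_mem measurableSet_Ioc).mono fun s hs => ?_)
        rw [norm_mul, Real.norm_eq_abs, Real.norm_of_nonneg (exp_nonneg _), ← mul_assoc]
        refine mul_le_mul_of_nonneg_right ?_ (exp_nonneg _)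
        simpa only [sub_sub_cancel] using abs_rpow_sub_rpow_le (x := t - s) (y := t) hα
          (sub_pos.mpr hut) (by linarith [hs.2]) (by linarith [hs.1])
    _ ≤ |α| * (t - u) ^ (α - 1) * ∫ s in Ioi 0, s * exp (-a * s) := by
        rw [integral_const_mul]
        refine mul_le_mul_of_nonneg_left (setIntegral_mono_set hs_exp ?_
          Ioc_subset_Ioi_self.eventuallyLE) (by positivity)
        filter_upwards [ae_restrict_mem measurableSet_Ioi] with s hs
        exact mul_nonneg (le_of_lt hs) (exp_nonneg _)
    _ = |α| * (t - u) ^ (α - 1) / a ^ 2 := by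
        rw [integral_mul_exp_neg_mul_Ioi ha, mul_one_div]

lemma rpow_sub_mul_rpowConvExp_eq (hα : -1 < α) (ha : a ≠ 0) (hu : 0 ≤ u) (hut : u ≤ t) :
    t ^ α - a * rpowConvExp α a t = t ^ α * exp (-a * u)
      + a * (∫ s in Ioc 0 u, (t ^ α - (t - s) ^ α) * exp (-a * s))
      - a * ∫ s in Ioc u t, (t - s) ^ α * exp (-a * s) := by
  have hint : IntegrableOn (fun s => (t - s) ^ α * exp (-a * s)) (Ioc 0 u) :=
    (integrableOn_sub_rpow_mul_exp_Ioc hα a (hu.trans hut)).mono_set (Ioc_subset_Ioc_right hut)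
  have hsplit : rpowConvExp α a t = (∫ s in Ioc 0 u, (t - s) ^ α * exp (-a * s))
      + ∫ s in Ioc u t, (t - s) ^ α * exp (-a * s) := by
    rw [rpowConvExp, ← Ioc_union_Ioc_eq_Ioc hu hut,
      setIntegral_union (Ioc_disjoint_Ioc_of_le le_rfl) measurableSet_Ioc hint
        (integrableOn_sub_rpow_mul_exp_Ioc hα a hut)]
  have hdiff : ∫ s in Ioc 0 u, (t ^ α - (t - s) ^ α) * exp (-a * s)
      = t ^ α * ((1 - exp (-a * u)) / a) - ∫ s in Ioc 0 u, (t - s) ^ α * exp (-a * s) := by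
    simp only [sub_mul]
    have hexp : IntegrableOn (fun s => t ^ α * exp (-a * s)) (Ioc 0 u) :=
      (by fun_prop : Continuous fun s => t ^ α * exp (-a * s)).integrableOn_Ioc
    rw [integral_sub hexp hint, integral_const_mul, integral_exp_neg_mul_Ioc ha hu]
  rw [hsplit, hdiff]
  field_simp
  ring

lemma abs_rpow_sub_mul_rpowConvExp_le (hα : -1 < α) (hα₁ : α ≤ 1) (ha : 0 < a) (hu : 0 ≤ u)
    (hut : u < t) :
    |t ^ α - a * rpowConvExp α a t| ≤ t ^ α * exp (-a * u) + |α| * (t - u) ^ (α - 1) / a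
      + a * (exp (-a * u) * ((t - u) ^ (α + 1) / (α + 1))) := by
  rw [rpow_sub_mul_rpowConvExp_eq hα ha.ne' hu hut.le]
  set near := ∫ s in Ioc 0 u, (t ^ α - (t - s) ^ α) * exp (-a * s)
  set far := ∫ s in Ioc u t, (t - s) ^ α * exp (-a * s)
  have hnear : |a * near| ≤ |α| * (t - u) ^ (α - 1) / a := by
    rw [abs_mul, abs_of_pos ha]
    calc a * |near| ≤ a * (|α| * (t - u) ^ (α - 1) / a ^ 2) :=
          mul_le_mul_of_nonneg_left (abs_setIntegral_rpow_sub_rpow_mul_exp_le hα₁ ha hut) ha.le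
      _ = |α| * (t - u) ^ (α - 1) / a := by field_simp
  have hfar := mul_le_mul_of_nonneg_left (setIntegral_sub_rpow_mul_exp_le hα ha.le hut.le) ha.le
  have hfar₀ : 0 ≤ a * far := mul_nonneg ha.le (setIntegral_sub_rpow_mul_exp_nonneg α a)
  have hfirst₀ : 0 ≤ t ^ α * exp (-a * u) :=
    mul_nonneg (rpow_nonneg (hu.trans hut.le) α) (exp_nonneg _)
  rw [abs_le] at hnear ⊢
  constructor <;> linarith

lemma exists_abs_rpow_sub_mul_rpowConvExp_le (hα : -1 < α) (hα₁ : α ≤ 1) (ha : 0 < a) :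
    ∃ C, ∀ t, 1 ≤ t →
      |t ^ α - a * rpowConvExp α a t| ≤ C * (t ^ (α - 1) + t ^ (α + 1) * exp (-(a / 2) * t)) := by
  refine ⟨1 + |α| / (a * 2 ^ (α - 1)) + a / (α + 1), fun t ht => ?_⟩
  have ht0 : 0 < t := by linarith
  have hbound := abs_rpow_sub_mul_rpowConvExp_le hα hα₁ ha (half_pos ht0).le (half_lt_self ht0)
  rw [sub_half, div_rpow ht0.le zero_le_two, div_rpow ht0.le zero_le_two,
    show -a * (t / 2) = -(a / 2) * t by ring] at hbound
  set E := exp (-(a / 2) * t)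
  have hE : 0 ≤ E := exp_nonneg _
  have hα_le : t ^ α ≤ t ^ (α + 1) := rpow_le_rpow_of_exponent_le ht (by linarith)
  have hhalf : t ^ (α + 1) / 2 ^ (α + 1) ≤ t ^ (α + 1) :=
    div_le_self (rpow_pos_of_pos ht0 _).le (one_le_rpow one_le_two (by linarith))
  have hX : 0 ≤ t ^ (α - 1) := (rpow_pos_of_pos ht0 _).le
  have hY : 0 ≤ t ^ (α + 1) * E := mul_nonneg (rpow_pos_of_pos ht0 _).le hE
  have hC₁ : 0 ≤ |α| / (a * 2 ^ (α - 1)) :=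
    div_nonneg (abs_nonneg α) (mul_pos ha (rpow_pos_of_pos two_pos _)).le
  have hC₂ : 0 ≤ a / (α + 1) := div_nonneg ha.le (by linarith)
  have h₁ : t ^ α * E ≤ t ^ (α + 1) * E := mul_le_mul_of_nonneg_right hα_le hE
  have h₂ : |α| * (t ^ (α - 1) / 2 ^ (α - 1)) / a = |α| / (a * 2 ^ (α - 1)) * t ^ (α - 1) := by
    ring
  have h₃ : a * (E * (t ^ (α + 1) / 2 ^ (α + 1) / (α + 1))) ≤ a / (α + 1) * (t ^ (α + 1) * E) := by
    rw [show a * (E * (t ^ (α + 1) / 2 ^ (α + 1) / (α + 1)))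
      = a / (α + 1) * (t ^ (α + 1) / 2 ^ (α + 1) * E) by ring]
    gcongr
  nlinarith [mul_nonneg hC₁ hY, mul_nonneg hC₂ hX]

lemma memLp_two_rpow_Ioc {β : ℝ} (hβ : -1 / 2 < β) (c : ℝ) :
    MemLp (fun t : ℝ => t ^ β) 2 (volume.restrict (Ioc 0 c)) := by
  rw [memLp_two_iff_integrable_sq (by fun_prop)]
  exact (intervalIntegral.intervalIntegrable_rpow' (r := β * 2) (by linarith)).1.congr_fun
    (fun t ht => (rpow_mul ht.1.le β 2).trans (rpow_two _)) measurableSet_Ioc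

lemma memLp_two_rpow_Ioi {β c : ℝ} (hβ : β < -1 / 2) (hc : 0 < c) :
    MemLp (fun t : ℝ => t ^ β) 2 (volume.restrict (Ioi c)) := by
  rw [memLp_two_iff_integrable_sq (by fun_prop)]
  exact (integrableOn_Ioi_rpow_of_lt (a := β * 2) (by linarith) hc).congr_fun
    (fun t ht => (rpow_mul (hc.trans ht).le β 2).trans (rpow_two _)) measurableSet_Ioi

lemma memLp_two_rpow_mul_exp_neg_mul_Ioi {β b : ℝ} (hβ : -1 / 2 < β) (hb : 0 < b) :
    MemLp (fun t : ℝ => t ^ β * exp (-b * t)) 2 (volume.restrict (Ioi 0)) := by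
  rw [memLp_two_iff_integrable_sq (by fun_prop)]
  refine (integrableOn_rpow_mul_exp_neg_mul_rpow (s := β * 2) (p := 1) (by linarith) one_pos
    (mul_pos two_pos hb)).congr_fun (fun t ht => ?_) measurableSet_Ioi
  dsimp only
  rw [rpow_one, mul_pow, rpow_mul (le_of_lt ht), rpow_two, sq (exp _), ← exp_add]
  ring_nf

lemma measurable_rpow_sub_mul_rpowConvExp (α a : ℝ) :
    Measurable fun t => t ^ α - a * rpowConvExp α a t :=
  (measurable_id.pow_const α).sub ((measurable_rpowConvExp α a).const_mul a)

lemma memLp_two_rpow_sub_mul_rpowConvExp_Ioc (hα : -1 / 2 < α) (ha : 0 ≤ a) :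
    MemLp (fun t => t ^ α - a * rpowConvExp α a t) 2 (volume.restrict (Ioc 0 1)) := by
  refine ((memLp_two_rpow_Ioc hα 1).add (memLp_const (a / (α + 1)))).mono'
    (measurable_rpow_sub_mul_rpowConvExp α a).aestronglyMeasurable
    ((ae_restrict_mem measurableSet_Ioc).mono fun t ht => ?_)
  have hα₁ : 0 < α + 1 := by linarith
  have hF_nonneg : 0 ≤ rpowConvExp α a t := setIntegral_sub_rpow_mul_exp_nonneg α a
  have hF_le : rpowConvExp α a t ≤ 1 / (α + 1) := by
    calc rpowConvExp α a t ≤ exp (-a * 0) * ((t - 0) ^ (α + 1) / (α + 1)) :=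
          setIntegral_sub_rpow_mul_exp_le (by linarith) ha ht.1.le
      _ ≤ 1 / (α + 1) := by
          rw [mul_zero, exp_zero, one_mul, sub_zero]
          gcongr
          exact rpow_le_one ht.1.le ht.2 hα₁.le
  have ht_nonneg : 0 ≤ t ^ α := rpow_nonneg ht.1.le α
  have haF := mul_le_mul_of_nonneg_left hF_le ha
  rw [mul_one_div] at haF
  rw [Pi.add_apply, Real.norm_eq_abs, abs_le]
  constructor <;> linarith [mul_nonneg ha hF_nonneg]

lemma memLp_two_rpow_sub_mul_rpowConvExp_Ioi (hα : α ∈ Ioo (-1 / 2) (1 / 2)) (ha : 0 < a) :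
    MemLp (fun t => t ^ α - a * rpowConvExp α a t) 2 (volume.restrict (Ioi 1)) := by
  obtain ⟨C, hC⟩ := exists_abs_rpow_sub_mul_rpowConvExp_le (α := α) (by linarith [hα.1])
    (by linarith [hα.2]) ha
  have hpow := memLp_two_rpow_Ioi (β := α - 1) (by linarith [hα.2]) one_pos
  have hdecay := (memLp_two_rpow_mul_exp_neg_mul_Ioi (β := α + 1) (by linarith [hα.1])
    (half_pos ha)).mono_measure (Measure.restrict_mono (Ioi_subset_Ioi zero_le_one) le_rfl)
  exact ((hpow.add hdecay).const_mul C).mono'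
    (measurable_rpow_sub_mul_rpowConvExp α a).aestronglyMeasurable
    ((ae_restrict_mem measurableSet_Ioi).mono fun t ht => hC t (le_of_lt ht))

theorem integrableOn_sq_rpow_sub_mul_rpowConvExp (hα : α ∈ Ioo (-1 / 2) (1 / 2)) (ha : 0 < a) :
    IntegrableOn (fun t => (t ^ α - a * rpowConvExp α a t) ^ 2) (Ioi 0) := by
  have hmeas := measurable_rpow_sub_mul_rpowConvExp α a
  rw [← Ioc_union_Ioi_eq_Ioi zero_le_one]
  exact IntegrableOn.union
    ((memLp_two_iff_integrable_sq hmeas.aestronglyMeasurable).1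
      (memLp_two_rpow_sub_mul_rpowConvExp_Ioc hα.1 ha.le))
    ((memLp_two_iff_integrable_sq hmeas.aestronglyMeasurable).1
      (memLp_two_rpow_sub_mul_rpowConvExp_Ioi hα ha))

end FractionalKernel

open FractionalKernel in
/-- The fractional kernel with `H ∈ (0,1)` is square integrable on `(0, ∞)`. -/
theorem kernel_square_integrable (H a : ℝ) (hH : H ∈ Set.Ioo (0 : ℝ) 1) (ha : 0 < a)
    (K : ℝ → ℝ)
    (hK : ∀ t : ℝ, 0 < t → K t = (1 / Real.Gamma (H + 1/2)) *
      (t ^ (H - 1/2) - a * ∫ s in Set.Ioc (0:ℝ) t, (t - s) ^ (H - 1/2) * Real.exp (-a * s))) :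
    MeasureTheory.IntegrableOn (fun t => K t ^ 2) (Set.Ioi (0 : ℝ)) := by
  have hα : H - 1 / 2 ∈ Ioo (-1 / 2) (1 / 2) := ⟨by linarith [hH.1], by linarith [hH.2]⟩
  refine IntegrableOn.congr_fun ((integrableOn_sq_rpow_sub_mul_rpowConvExp hα ha).const_mul
    ((1 / Real.Gamma (H + 1 / 2)) ^ 2)) (fun t ht => ?_) measurableSet_Ioi
  rw [hK t ht, rpowConvExp]
  ring
end
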